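/- Let $k\ge 1$ be an integer, $C>0$, and let $M_0, M_1,\dots$ be nonnegative functions on $[0,\infty)$, each nonincreasing, satisfying for all $0\le s_1\le s_2$ and each $0\le j\le k-1$: $M_j(s_2) + \tfrac12\int_{s_1}^{s_2} M_{j+1}(s)\,ds \le C\, M_j(s_1)$. Then for all $s> 0$, $M_k(s) \le \frac{k!\,(2C)^k}{s^k}\, M_0(0)$. -/

import Mathlib

open MeasureTheory Set

/-!
Fix `s > 0` and prove `(s - t)^k / k! · M_k(s) ≤ (2C)^k · M_0(t)` for `0 ≤ t ≤ s` by induction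
on `k`, applying the induction hypothesis to the shifted hierarchy `M_1, M_2, …`. Integrating its
conclusion `(s - u)^k / k! · M_{k+1}(s) ≤ (2C)^k · M_1(u)` over `u ∈ [t, s]` turns the left side
into the next Taylor weight `(s - t)^(k+1) / (k+1)!`, while the first energy inequality gives
`∫_t^s M_1 ≤ 2C · M_0(t)`. Then take `t = 0`.
-/

theorem integral_sub_pow_div_factorial (n : ℕ) (t s : ℝ) :
    ∫ u in t..s, (s - u) ^ n / n.factorial = (s - t) ^ (n + 1) / (n + 1).factorial := by
  rw [intervalIntegral.integral_div, intervalIntegral.integral_comp_sub_left (· ^ n) s,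
    integral_pow, Nat.factorial_succ]
  push_cast
  field_simp
  ring

theorem taylor_weight_mul_le_of_energy_hierarchy (k : ℕ) {C : ℝ} (hC : 0 ≤ C)
    (M : ℕ → ℝ → ℝ)
    (hnonneg : ∀ j, ∀ s ≥ (0 : ℝ), 0 ≤ M j s)
    (hmono : ∀ j, AntitoneOn (M j) (Ici (0 : ℝ)))
    (hineq : ∀ j < k, ∀ s₁ s₂ : ℝ, 0 ≤ s₁ → s₁ ≤ s₂ →
      M j s₂ + (1 / 2) * (∫ s in s₁..s₂, M (j + 1) s) ≤ C * M j s₁)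
    {t s : ℝ} (ht : 0 ≤ t) (hts : t ≤ s) :
    (s - t) ^ k / k.factorial * M k s ≤ (2 * C) ^ k * M 0 t := by
  induction k generalizing M t with
  | zero => simpa using hmono 0 ht (ht.trans hts) hts
  | succ k ih =>
    have hshift : ∀ u ∈ Icc t s,
        (s - u) ^ k / k.factorial * M (k + 1) s ≤ (2 * C) ^ k * M 1 u := fun u hu =>
      ih (fun j => M (j + 1)) (fun j => hnonneg (j + 1)) (fun j => hmono (j + 1))
        (fun j hj => hineq (j + 1) (by omega)) (ht.trans hu.1) hu.2
    have hM₁ : IntervalIntegrable (M 1) volume t s :=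
      ((hmono 1).mono fun u hu => ht.trans (uIcc_of_le hts ▸ hu).1).intervalIntegrable
    have henergy : ∫ u in t..s, M 1 u ≤ 2 * C * M 0 t := by
      have := hineq 0 k.succ_pos t s ht hts
      have := hnonneg 0 s (ht.trans hts)
      linarith
    calc (s - t) ^ (k + 1) / (k + 1).factorial * M (k + 1) s
        = ∫ u in t..s, (s - u) ^ k / k.factorial * M (k + 1) s := by
          rw [intervalIntegral.integral_mul_const, integral_sub_pow_div_factorial]
      _ ≤ ∫ u in t..s, (2 * C) ^ k * M 1 u :=
          intervalIntegral.integral_mono_on hts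
            (Continuous.intervalIntegrable (by fun_prop) _ _) (hM₁.const_mul _) hshift
      _ = (2 * C) ^ k * ∫ u in t..s, M 1 u := intervalIntegral.integral_const_mul _ _
      _ ≤ (2 * C) ^ k * (2 * C * M 0 t) := by gcongr
      _ = (2 * C) ^ (k + 1) * M 0 t := by ring

theorem iteration_decay_general
    (k : ℕ) (C : ℝ) (hC : 0 < C)
    (M : ℕ → ℝ → ℝ)
    (hnonneg : ∀ j, ∀ s ≥ (0 : ℝ), 0 ≤ M j s)
    (hmono : ∀ j, AntitoneOn (M j) (Ici (0 : ℝ)))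
    (hineq : ∀ j < k, ∀ s₁ s₂ : ℝ, 0 ≤ s₁ → s₁ ≤ s₂ →
      M j s₂ + (1 / 2) * (∫ s in s₁..s₂, M (j + 1) s) ≤ C * M j s₁) :
    ∀ s : ℝ, 0 < s →
      M k s ≤ (Nat.factorial k : ℝ) * (2 * C) ^ k / s ^ k * M 0 0 := by
  intro s hs
  have h := taylor_weight_mul_le_of_energy_hierarchy k hC.le M hnonneg hmono hineq le_rfl hs.le
  rw [sub_zero, div_mul_eq_mul_div, div_le_iff₀ (by positivity)] at h
  rw [div_mul_eq_mul_div, le_div_iff₀ (by positivity)]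
  linarith

/-- Abstract iteration lemma: iterated monotone energy inequalities with
integrated decay imply polynomial-in-time decay. -/
theorem iteration_decay
    (k : ℕ) (hk : 1 ≤ k) (C : ℝ) (hC : 0 < C)
    (M : ℕ → ℝ → ℝ)
    (hnonneg : ∀ j, ∀ s ≥ (0 : ℝ), 0 ≤ M j s)
    (hmono : ∀ j, AntitoneOn (M j) (Ici (0 : ℝ)))
    (hineq : ∀ j < k, ∀ s₁ s₂ : ℝ, 0 ≤ s₁ → s₁ ≤ s₂ →
      M j s₂ + (1 / 2) * (∫ s in s₁..s₂, M (j + 1) s) ≤ C * M j s₁) :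
    ∀ s : ℝ, 0 < s →
      M k s ≤ (Nat.factorial k : ℝ) * (2 * C) ^ k / s ^ k * M 0 0 :=
  iteration_decay_general k C hC M hnonneg hmono hineq
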